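/- If u and v are orthonormal octonions, then m_{u,v} = m_u ∘ m_v is a complex structure on O ⊕ O, i.e. m_{u,v} ∘ m_{u,v} = -Id. -/

import Mathlib

open Quaternion

noncomputable section

/-- The octonions, via the Cayley–Dickson construction on the quaternions. -/
def O : Type := ℍ[ℝ] × ℍ[ℝ]

namespace O

instance : AddCommGroup O := inferInstanceAs (AddCommGroup (ℍ[ℝ] × ℍ[ℝ]))
instance : Module ℝ O := inferInstanceAs (Module ℝ (ℍ[ℝ] × ℍ[ℝ]))

def mk (a b : ℍ[ℝ]) : O := (a, b)
def fst (x : O) : ℍ[ℝ] := Prod.fst x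
def snd (x : O) : ℍ[ℝ] := Prod.snd x

instance : One O := ⟨mk 1 0⟩
/-- Cayley–Dickson multiplication. -/
instance : Mul O := ⟨fun x y =>
  mk (fst x * fst y - star (snd y) * snd x) (snd y * fst x + snd x * star (fst y))⟩

/-- Octonion conjugation. -/
def conj (x : O) : O := mk (star (fst x)) (-(snd x))

/-- The standard inner product on `O ≅ ℝ⁸`. -/
def inner (x y : O) : ℝ := (Inner.inner ℝ (fst x) (fst y) : ℝ) + (Inner.inner ℝ (snd x) (snd y) : ℝ)

def normSq (x : O) : ℝ := inner x x
def norm (x : O) : ℝ := Real.sqrt (normSq x)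

/-- The map `m_u` on `O ⊕ O`, given by `m_u (x, x') = (x'·u, -x·ū)`. -/
def m (u : O) : O × O → O × O := fun p => (p.2 * u, -(p.1 * conj u))

/-- The standard inner product on `O ⊕ O`. -/
def innerPair (p q : O × O) : ℝ := inner p.1 q.1 + inner p.2 q.2

end O


/-! The maps `m_u` satisfy the Clifford relation `m_u m_v + m_v m_u = -2⟨u, v⟩`: this is the
linearisation of the alternative laws `(x ū) u = |u|² x = (x u) ū`, i.e.
`(x ū) v + (x v̄) u = 2⟨u, v⟩ x = (x u) v̄ + (x v) ū`. For orthonormal `u, v` it gives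
`m_u² = m_v² = -1` and `m_u m_v = -m_v m_u`, hence `(m_u m_v)² = -m_u² m_v² = -1`. -/

namespace Quaternion

theorem mul_star_add_mul_star (a b : ℍ[ℝ]) :
    a * star b + b * star a = ((2 * Inner.inner ℝ a b : ℝ) : ℍ[ℝ]) := by
  rw [inner_def, ← self_add_star', star_mul, star_star]

theorem inner_star_star (a b : ℍ[ℝ]) :
    Inner.inner ℝ (star a) (star b) = Inner.inner ℝ a b := by
  simp only [inner_def, star_star, re_mul, re_star, imI_star, imJ_star, imK_star]
  ring

theorem star_mul_add_star_mul (a b : ℍ[ℝ]) :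
    star a * b + star b * a = ((2 * Inner.inner ℝ a b : ℝ) : ℍ[ℝ]) := by
  simpa only [star_star, inner_star_star] using mul_star_add_mul_star (star a) (star b)

end Quaternion

namespace O

theorem ext {x y : O} (h₁ : fst x = fst y) (h₂ : snd x = snd y) : x = y := Prod.ext h₁ h₂

@[simp] theorem fst_mul (x y : O) : fst (x * y) = fst x * fst y - star (snd y) * snd x := rfl
@[simp] theorem snd_mul (x y : O) : snd (x * y) = snd y * fst x + snd x * star (fst y) := rfl
@[simp] theorem fst_add (x y : O) : fst (x + y) = fst x + fst y := rfl
@[simp] theorem snd_add (x y : O) : snd (x + y) = snd x + snd y := rfl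
@[simp] theorem fst_neg (x : O) : fst (-x) = -fst x := rfl
@[simp] theorem snd_neg (x : O) : snd (-x) = -snd x := rfl
@[simp] theorem fst_smul (r : ℝ) (x : O) : fst (r • x) = r • fst x := rfl
@[simp] theorem snd_smul (r : ℝ) (x : O) : snd (r • x) = r • snd x := rfl
@[simp] theorem fst_conj (x : O) : fst (conj x) = star (fst x) := rfl
@[simp] theorem snd_conj (x : O) : snd (conj x) = -snd x := rfl

@[simp] theorem conj_conj (x : O) : conj (conj x) = x := ext (star_star _) (neg_neg _)

theorem inner_def (x y : O) :
    inner x y = Inner.inner ℝ (fst x) (fst y) + Inner.inner ℝ (snd x) (snd y) := rfl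

theorem inner_conj_conj (x y : O) : inner (conj x) (conj y) = inner x y := by
  simp only [inner_def, fst_conj, snd_conj, Quaternion.inner_star_star, inner_neg_neg]

theorem neg_mul (x y : O) : -x * y = -(x * y) :=
  ext (by simp only [fst_mul, fst_neg, snd_neg]; noncomm_ring)
    (by simp only [snd_mul, fst_neg, snd_neg]; noncomm_ring)

/-- In each Cayley–Dickson component the sum collapses to quaternion terms `ā b + b̄ a` and
`a b̄ + b ā`, which are the real scalars `2⟨a, b⟩` and hence central. -/
theorem mul_conj_mul_add_mul_conj_mul (x u v : O) :
    x * conj u * v + x * conj v * u = (2 * inner u v) • x := by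
  apply ext
  · calc _ = fst x * (star (fst u) * fst v + star (fst v) * fst u)
          + (star (snd u) * snd v + star (snd v) * snd u) * fst x := by
          simp only [fst_add, fst_mul, snd_mul, fst_conj, snd_conj, star_neg, star_star]
          noncomm_ring
      _ = _ := by
          rw [Quaternion.star_mul_add_star_mul, Quaternion.star_mul_add_star_mul,
            Quaternion.mul_coe_eq_smul, Quaternion.coe_mul_eq_smul, inner_def, fst_smul]
          module
  · calc _ = snd x * (fst u * star (fst v) + fst v * star (fst u))
          + (snd u * star (snd v) + snd v * star (snd u)) * snd x := by
          simp only [snd_add, fst_mul, snd_mul, fst_conj, snd_conj, star_neg, star_star]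
          noncomm_ring
      _ = _ := by
          rw [Quaternion.mul_star_add_mul_star, Quaternion.mul_star_add_mul_star,
            Quaternion.mul_coe_eq_smul, Quaternion.coe_mul_eq_smul, inner_def, snd_smul]
          module

theorem mul_mul_conj_add_mul_mul_conj (x u v : O) :
    x * u * conj v + x * v * conj u = (2 * inner u v) • x := by
  simpa only [conj_conj, inner_conj_conj] using mul_conj_mul_add_mul_conj_mul x (conj u) (conj v)

theorem inner_comm (x y : O) : inner x y = inner y x := by
  rw [inner_def, inner_def, real_inner_comm (fst x), real_inner_comm (snd x)]

theorem m_neg (u : O) (p : O × O) : m u (-p) = -m u p :=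
  Prod.ext (neg_mul _ _) (congrArg Neg.neg (neg_mul _ _))

theorem m_m_add_m_m (u v : O) (p : O × O) :
    m u (m v p) + m v (m u p) = -((2 * inner u v) • p) := by
  refine Prod.ext ?_ ?_
  · show -(p.1 * conj v) * u + -(p.1 * conj u) * v = -((2 * inner u v) • p.1)
    rw [neg_mul, neg_mul, ← neg_add, mul_conj_mul_add_mul_conj_mul, inner_comm]
  · show -(p.2 * v * conj u) + -(p.2 * u * conj v) = -((2 * inner u v) • p.2)
    rw [← neg_add, mul_mul_conj_add_mul_mul_conj, inner_comm]

theorem m_m_self (u : O) (p : O × O) : m u (m u p) = -(normSq u • p) := by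
  have h := m_m_add_m_m u u p
  rw [← two_smul ℝ, mul_smul, ← smul_neg] at h
  exact smul_right_injective _ two_ne_zero h

theorem m_m_anticomm {u v : O} (h : inner u v = 0) (p : O × O) : m v (m u p) = -m u (m v p) := by
  rw [eq_neg_iff_add_eq_zero, add_comm, m_m_add_m_m, h, mul_zero, zero_smul, neg_zero]

end O

/-- For orthonormal octonions `u, v`, `m_{u,v} = m_u ∘ m_v` is a complex structure on
`O ⊕ O`: `m_{u,v} ∘ m_{u,v} = -Id`. -/
theorem m_pair_complex_structure (u v : O) (hu : O.norm u = 1) (hv : O.norm v = 1)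
    (huv : O.inner u v = 0) :
    ∀ p : O × O, O.m u (O.m v (O.m u (O.m v p))) = -p := by
  intro p
  have hu' : O.normSq u = 1 := Real.sqrt_eq_one.mp hu
  have hv' : O.normSq v = 1 := Real.sqrt_eq_one.mp hv
  rw [O.m_m_anticomm huv, O.m_neg, O.m_m_self, O.m_m_self, hu', hv', one_smul, one_smul, neg_neg]
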